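/- The function θ₂(t) = 6428310336000(19 + 3t)e^t − 87648575175 + 12063818025t + 11024679960t² + 1860693660t³ + 134647380t⁴ + 3367980t⁵ − 115920t⁶ − 9684t⁷ − 234t⁸ − 2t⁹ is positive and increasing on (0,∞). -/

import Mathlib

/-!
The derivative is `6428310336000 (22 + 3t) eᵗ` plus a polynomial whose only negative terms,
of degrees 5 to 8, have small coefficients; each of them is absorbed by the exponential term
through `eᵗ ≥ tᵏ / k!`. So `θ₂` is strictly increasing on `[0, ∞)`, and `θ₂ 0 > 0`.
-/

noncomputable def θ₂ (t : ℝ) : ℝ :=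
  6428310336000*(19 + 3*t)*Real.exp t - 87648575175 + 12063818025*t
    + 11024679960*t^2 + 1860693660*t^3 + 134647380*t^4 + 3367980*t^5
    - 115920*t^6 - 9684*t^7 - 234*t^8 - 2*t^9

noncomputable def θ₂' (t : ℝ) : ℝ :=
  6428310336000*(22 + 3*t)*Real.exp t + 12063818025 + 22049359920*t
    + 5582080980*t^2 + 538589520*t^3 + 16839900*t^4 - 695520*t^5
    - 67788*t^6 - 1872*t^7 - 18*t^8

theorem hasDerivAt_θ₂ (t : ℝ) : HasDerivAt θ₂ (θ₂' t) t := by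
  have hid := hasDerivAt_id' (x := t)
  have hmon (n : ℕ) (c : ℝ) := (hasDerivAt_pow n t).const_mul c
  have h := ((((((((((((hid.const_mul 3).const_add 19).const_mul 6428310336000).mul
    (Real.hasDerivAt_exp t)).sub_const 87648575175).add (hid.const_mul 12063818025)).add
    (hmon 2 11024679960)).add (hmon 3 1860693660)).add (hmon 4 134647380)).add
    (hmon 5 3367980)).sub (hmon 6 115920)).sub (hmon 7 9684)).sub (hmon 8 234) |>.sub (hmon 9 2)
  refine h.congr_deriv ?_
  unfold θ₂'
  norm_num
  ring

theorem θ₂'_pos {t : ℝ} (ht : 0 < t) : 0 < θ₂' t := by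
  have hexp (n : ℕ) := Real.pow_div_factorial_le_exp (x := t) ht.le n
  have h5 := hexp 5
  have h6 := hexp 6
  have h7 := hexp 7
  have h8 := hexp 8
  norm_num [Nat.factorial] at h5 h6 h7 h8
  have htexp : 0 < t * Real.exp t := by positivity
  unfold θ₂'
  linarith [pow_pos ht 2, pow_pos ht 3, pow_pos ht 4, Real.exp_pos t]

theorem strictMonoOn_θ₂ : StrictMonoOn θ₂ (Set.Ici 0) := by
  refine strictMonoOn_of_deriv_pos (convex_Ici 0)
    (fun x _ => (hasDerivAt_θ₂ x).continuousAt.continuousWithinAt) fun x hx => ?_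
  rw [interior_Ici] at hx
  rw [(hasDerivAt_θ₂ x).deriv]
  exact θ₂'_pos hx

theorem stmt10 : (∀ t : ℝ, 0 < t → 0 < θ₂ t) ∧ StrictMonoOn θ₂ (Set.Ioi 0) := by
  refine ⟨fun t ht => ?_, strictMonoOn_θ₂.mono Set.Ioi_subset_Ici_self⟩
  have h0 : 0 < θ₂ 0 := by norm_num [θ₂]
  exact h0.trans (strictMonoOn_θ₂ Set.self_mem_Ici (Set.mem_Ici.2 ht.le) ht)
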